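/- arXiv:math/9809067 — 4 statements merged into one kernel-verified Lean document; each statement's English description precedes it below -/
import Mathlib

section
/- For every integer g ≥ 3, the product ∏_{j=0}^{g−4} C(2g−7−2j, g−3−j) divides the product ∏_{j=0}^{g−4} C(g+j, g−3−j); that is, Room's expression D(g) = (∏_{j=0}^{g−4} C(g+j, g−3−j)) / (∏_{j=0}^{g−4} C(2g−7−2j, g−3−j)) is a positive integer. -/
open Finset Nat

/-- superfactorial -/
def sfa (n : ℕ) : ℕ := ∏ i ∈ Finset.range n, i !

lemma sfa_succ (n : ℕ) : sfa (n+1) = sfa n * n ! := Finset.prod_range_succ _ _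

lemma sfa_pos (n : ℕ) : 0 < sfa n := Finset.prod_pos fun i _ => Nat.factorial_pos i

lemma sfa_shift (c n : ℕ) : sfa c * ∏ j ∈ range n, (c + j)! = sfa (c + n) := by
  induction n with
  | zero => simp
  | succ n ih => rw [prod_range_succ, ← mul_assoc, ih, ← add_assoc, sfa_succ]

lemma keyA (m : ℕ) :
    sfa (2*m+3) * sfa m * (m+1)! * (m+2)! =
      sfa (m+3) * (∏ j ∈ range m, (2*j+3)!) * (∏ j ∈ range m, (2*j+1)!) *
        2^m * (2*m+2)! := by
  induction m with
  | zero => decide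
  | succ m ih =>
    have e1 : sfa (2*(m+1)+3) = sfa (2*m+3) * (2*m+3)! * (2*m+4)! := by
      have : 2*(m+1)+3 = (2*m+4)+1 := by ring
      rw [this, sfa_succ, show 2*m+4 = (2*m+3)+1 from rfl, sfa_succ]
    have e2 : sfa (m+1) = sfa m * m ! := sfa_succ m
    have e3 : sfa (m+1+3) = sfa (m+3) * (m+3)! := by
      rw [show m+1+3 = (m+3)+1 from by ring, sfa_succ]
    have e4 : (∏ j ∈ range (m+1), (2*j+3)!) = (∏ j ∈ range m, (2*j+3)!) * (2*m+3)! :=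
      prod_range_succ _ _
    have e5 : (∏ j ∈ range (m+1), (2*j+1)!) = (∏ j ∈ range m, (2*j+1)!) * (2*m+1)! :=
      prod_range_succ _ _
    have f1 : (m+1+1)! = (m+2) * (m+1)! := rfl
    have f2 : (m+1+2)! = (m+3) * ((m+2) * (m+1)!) := rfl
    have f3 : (m+1)! = (m+1) * m ! := rfl
    have f4 : (2*m+4)! = (2*m+4) * ((2*m+3) * ((2*m+2) * (2*m+1)!)) := rfl
    have f5 : (2*(m+1)+2)! = (2*m+4) * ((2*m+3) * (2*m+2)!) := by
      rw [show 2*(m+1)+2 = ((2*m+2)+1)+1 from by ring]; rfl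
    have f6 : (2*m+2)! = (2*m+2) * (2*m+1)! := rfl
    have f7 : (m+3)! = (m+3) * ((m+2) * (m+1)!) := rfl
    have hc : 0 < (m+1)! := Nat.factorial_pos _
    apply Nat.eq_of_mul_eq_mul_right hc
    rw [e1, e2, e3, e4, e5, f5, f4, f6, f7, f1, f3]
    rw [show (m+2)! = (m+2)*(m+1)! from rfl, f3, f6] at ih
    zify at ih ⊢
    linear_combination (((2*m+3)! : ℤ) *
      ((2*(m:ℤ)+4)*((2*(m:ℤ)+3)*((2*(m:ℤ)+2)*((2*m+1)! : ℤ)))) *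
      (m ! : ℤ) * (((m:ℤ)+3)*(((m:ℤ)+2)*(((m:ℤ)+1)*(m ! : ℤ))))) * ih

lemma keyA' (m : ℕ) :
    (∏ j ∈ range m, (m+3+j)!) * sfa m * (m+1)! * (m+2)! =
      (∏ j ∈ range m, (2*j+3)!) * (∏ j ∈ range m, (2*j+1)!) * 2^m * (2*m+2)! := by
  have h := keyA m
  have hs := sfa_shift (m+3) m
  have h3 : m + 3 + m = 2*m+3 := by ring
  rw [h3] at hs
  apply Nat.eq_of_mul_eq_mul_left (sfa_pos (m+3))
  calc sfa (m+3) * ((∏ j ∈ range m, (m+3+j)!) * sfa m * (m+1)! * (m+2)!)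
      = (sfa (m+3) * ∏ j ∈ range m, (m+3+j)!) * sfa m * (m+1)! * (m+2)! := by ring
    _ = sfa (2*m+3) * sfa m * (m+1)! * (m+2)! := by rw [hs]
    _ = sfa (m+3) * (∏ j ∈ range m, (2*j+3)!) * (∏ j ∈ range m, (2*j+1)!) *
        2^m * (2*m+2)! := h
    _ = sfa (m+3) * ((∏ j ∈ range m, (2*j+3)!) * (∏ j ∈ range m, (2*j+1)!) *
        2^m * (2*m+2)!) := by ring

lemma catE (m : ℕ) : catalan (m+1) * ((m+1)! * (m+2)!) = (2*m+2)! := by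
  have h := succ_mul_catalan_eq_centralBinom (m+1)
  have hb : Nat.centralBinom (m+1) * ((m+1)! * (m+1)!) = (2*(m+1))! := by
    have := Nat.choose_mul_factorial_mul_factorial (n := 2*(m+1)) (k := m+1) (by omega)
    rw [Nat.centralBinom]
    have h2 : 2*(m+1) - (m+1) = m+1 := by omega
    rw [h2] at this; linarith [this]
  have f2 : (m+2)! = (m+2) * (m+1)! := rfl
  calc catalan (m+1) * ((m+1)! * (m+2)!)
      = ((m+1+1) * catalan (m+1)) * ((m+1)! * (m+1)!) := by rw [f2]; ring
    _ = Nat.centralBinom (m+1) * ((m+1)! * (m+1)!) := by rw [h]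
    _ = (2*(m+1))! := hb
    _ = (2*m+2)! := by ring_nf

lemma main_eq (m : ℕ) :
    (∏ j ∈ range m, Nat.choose (2*m-1-2*j) (m-j)) * (2^m * catalan (m+1)) =
      ∏ j ∈ range m, Nat.choose (m+3+j) (m-j) := by
  -- identity (I)
  have I : (∏ j ∈ range m, Nat.choose (m+3+j) (m-j)) *
      ((∏ j ∈ range m, (m-j)!) * (∏ j ∈ range m, (2*j+3)!)) =
      ∏ j ∈ range m, (m+3+j)! := by
    rw [← Finset.prod_mul_distrib, ← Finset.prod_mul_distrib]
    apply Finset.prod_congr rfl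
    intro j hj
    have hj' : j < m := Finset.mem_range.mp hj
    have h1 : m - j ≤ m+3+j := by omega
    have := Nat.choose_mul_factorial_mul_factorial h1
    have h2 : m+3+j - (m-j) = 2*j+3 := by omega
    rw [h2] at this
    linarith [this]
  have II : (∏ j ∈ range m, Nat.choose (2*m-1-2*j) (m-j)) *
      ((∏ j ∈ range m, (m-j)!) * (∏ j ∈ range m, (m-1-j)!)) =
      ∏ j ∈ range m, (2*m-1-2*j)! := by
    rw [← Finset.prod_mul_distrib, ← Finset.prod_mul_distrib]
    apply Finset.prod_congr rfl
    intro j hj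
    have hj' : j < m := Finset.mem_range.mp hj
    have h1 : m - j ≤ 2*m-1-2*j := by omega
    have := Nat.choose_mul_factorial_mul_factorial h1
    have h2 : 2*m-1-2*j - (m-j) = m-1-j := by omega
    rw [h2] at this
    linarith [this]
  -- reindex
  have r1 : (∏ j ∈ range m, (m-j)!) = ∏ j ∈ range m, (j+1)! := by
    rw [← Finset.prod_range_reflect (fun k => (k+1)!) m]
    apply Finset.prod_congr rfl
    intro j hj
    have : j < m := Finset.mem_range.mp hj
    congr 1; omega
  have r2 : (∏ j ∈ range m, (m-1-j)!) = sfa m := by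
    rw [sfa, ← Finset.prod_range_reflect (fun k => k !) m]
  have r3 : (∏ j ∈ range m, (2*m-1-2*j)!) = ∏ j ∈ range m, (2*j+1)! := by
    rw [← Finset.prod_range_reflect (fun k => (2*k+1)!) m]
    apply Finset.prod_congr rfl
    intro j hj
    have : j < m := Finset.mem_range.mp hj
    congr 1; omega
  -- cancellation
  have hT : 0 < (∏ j ∈ range m, (j+1)!) * (∏ j ∈ range m, (2*j+3)!) *
      sfa m * (m+1)! * (m+2)! := by
    have : ∀ n : ℕ, 0 < ∏ j ∈ range n, (j+1)! := fun n =>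
      Finset.prod_pos fun i _ => Nat.factorial_pos _
    refine Nat.mul_pos (Nat.mul_pos (Nat.mul_pos (Nat.mul_pos (this m) ?_) (sfa_pos m)) (Nat.factorial_pos _)) (Nat.factorial_pos _)
    exact Finset.prod_pos fun i _ => Nat.factorial_pos _
  apply Nat.eq_of_mul_eq_mul_right hT
  rw [r1] at I II
  rw [r2] at II
  calc (∏ j ∈ range m, Nat.choose (2*m-1-2*j) (m-j)) * (2^m * catalan (m+1)) *
        ((∏ j ∈ range m, (j+1)!) * (∏ j ∈ range m, (2*j+3)!) * sfa m * (m+1)! * (m+2)!)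
      = ((∏ j ∈ range m, Nat.choose (2*m-1-2*j) (m-j)) *
          ((∏ j ∈ range m, (j+1)!) * sfa m)) *
        (catalan (m+1) * ((m+1)! * (m+2)!)) *
        ((∏ j ∈ range m, (2*j+3)!) * 2^m) := by ring
    _ = (∏ j ∈ range m, (2*m-1-2*j)!) * (2*m+2)! *
        ((∏ j ∈ range m, (2*j+3)!) * 2^m) := by rw [II, catE]
    _ = (∏ j ∈ range m, (2*j+1)!) * (2*m+2)! *
        ((∏ j ∈ range m, (2*j+3)!) * 2^m) := by rw [r3]
    _ = (∏ j ∈ range m, (2*j+3)!) * (∏ j ∈ range m, (2*j+1)!) * 2^m * (2*m+2)! := by ring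
    _ = (∏ j ∈ range m, (m+3+j)!) * sfa m * (m+1)! * (m+2)! := (keyA' m).symm
    _ = ((∏ j ∈ range m, Nat.choose (m+3+j) (m-j)) *
          ((∏ j ∈ range m, (j+1)!) * (∏ j ∈ range m, (2*j+3)!))) *
        (sfa m * (m+1)! * (m+2)!) := by rw [I]; ring
    _ = (∏ j ∈ range m, Nat.choose (m+3+j) (m-j)) *
        ((∏ j ∈ range m, (j+1)!) * (∏ j ∈ range m, (2*j+3)!) * sfa m * (m+1)! * (m+2)!) := by
        ring

/-- For every integer `g ≥ 3`, `∏_{j=0}^{g-4} C(2g-7-2j, g-3-j)` divides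
`∏_{j=0}^{g-4} C(g+j, g-3-j)`, i.e. Room's expression
`D(g) = (∏_{j=0}^{g-4} C(g+j, g-3-j)) / (∏_{j=0}^{g-4} C(2g-7-2j, g-3-j))`
is a positive integer. -/
theorem room_degree_is_positive_integer (g : ℕ) (hg : 3 ≤ g) :
    (∏ j ∈ Finset.range (g - 3), Nat.choose (2 * g - 7 - 2 * j) (g - 3 - j)) ∣
      (∏ j ∈ Finset.range (g - 3), Nat.choose (g + j) (g - 3 - j)) ∧
    0 < (∏ j ∈ Finset.range (g - 3), Nat.choose (g + j) (g - 3 - j)) /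
      (∏ j ∈ Finset.range (g - 3), Nat.choose (2 * g - 7 - 2 * j) (g - 3 - j)) := by
  obtain ⟨m, rfl⟩ : ∃ m, g = m + 3 := ⟨g - 3, by omega⟩
  have hm : m + 3 - 3 = m := by omega
  have eN : (∏ j ∈ Finset.range (m+3-3), Nat.choose (m+3+j) (m+3-3-j)) =
      ∏ j ∈ range m, Nat.choose (m+3+j) (m-j) := by
    rw [hm]
  have eD : (∏ j ∈ Finset.range (m+3-3), Nat.choose (2*(m+3)-7-2*j) (m+3-3-j)) =
      ∏ j ∈ range m, Nat.choose (2*m-1-2*j) (m-j) := by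
    rw [hm]
    exact Finset.prod_congr rfl fun j _ => congrArg₂ Nat.choose (by omega) rfl
  rw [eN, eD]
  have h := main_eq m
  have hDpos : 0 < ∏ j ∈ range m, Nat.choose (2*m-1-2*j) (m-j) := by
    apply Finset.prod_pos
    intro j hj
    have : j < m := Finset.mem_range.mp hj
    exact Nat.choose_pos (by omega)
  have hEpos : 0 < 2^m * catalan (m+1) := by
    have hc : 0 < catalan (m+1) := by
      by_contra hc
      have h0 : catalan (m+1) = 0 := by omega
      have := succ_mul_catalan_eq_centralBinom (m+1)
      rw [h0, mul_zero] at this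
      exact absurd this.symm (Nat.centralBinom_pos (m+1)).ne'
    positivity
  constructor
  · exact ⟨2^m * catalan (m+1), h.symm⟩
  · rw [← h, Nat.mul_div_cancel_left _ hDpos]
    exact hEpos
end

section
/- For every integer g ≥ 4, the integer D(g) = (∏_{j=0}^{g−4} C(g+j, g−3−j)) / (∏_{j=0}^{g−4} C(2g−7−2j, g−3−j)) is even; that is, 2·∏_{j=0}^{g−4} C(2g−7−2j, g−3−j) divides ∏_{j=0}^{g−4} C(g+j, g−3−j). -/
open Finset Nat

/-- Key factorial-product identity, proved by induction on `m`:
`(∏_{j<m} (m+3+j)!) · (∏_{j<m} j!) · (m+2)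
  = 2^m · C(2m+2, m+1) · (∏_{j<m} (2j+3)!) · (∏_{j<m} (2j+1)!)`. -/
lemma room_claim (m : ℕ) :
    (∏ j ∈ range m, (m + 3 + j)!) * (∏ j ∈ range m, j !) * (m + 2) =
      2 ^ m * Nat.centralBinom (m + 1) * (∏ j ∈ range m, (2 * j + 3)!) *
        (∏ j ∈ range m, (2 * j + 1)!) := by
  induction m with
  | zero => simp [Nat.centralBinom]
  | succ m ih =>
    set A := ∏ j ∈ range m, (m + 3 + j)! with hA
    set E := ∏ j ∈ range m, j ! with hE
    set G := ∏ j ∈ range m, (2 * j + 3)! with hG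
    set O := ∏ j ∈ range m, (2 * j + 1)! with hO
    -- reindexing fact
    have h1 : (∏ j ∈ range (m + 1), (m + 1 + 3 + j)!) * (m + 3)! =
        A * (2 * m + 3)! * (2 * m + 4)! := by
      have e1 : ∏ j ∈ range (m + 1), (m + 3 + j)! = A * (2 * m + 3)! := by
        rw [Finset.prod_range_succ, show m + 3 + m = 2 * m + 3 by omega]
      have e2 : ∏ j ∈ range (m + 1), (m + 3 + j)! =
          (∏ j ∈ range m, (m + 1 + 3 + j)!) * (m + 3)! := by
        rw [Finset.prod_range_succ']
        congr 1
        · apply Finset.prod_congr rfl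
          intro j _
          congr 1 <;> omega
      have e3 : ∏ j ∈ range (m + 1), (m + 1 + 3 + j)! =
          (∏ j ∈ range m, (m + 1 + 3 + j)!) * (2 * m + 4)! := by
        rw [Finset.prod_range_succ, show m + 1 + 3 + m = 2 * m + 4 by omega]
      rw [e3]
      calc (∏ j ∈ range m, (m + 1 + 3 + j)!) * (2 * m + 4)! * (m + 3)!
          = ((∏ j ∈ range m, (m + 1 + 3 + j)!) * (m + 3)!) * (2 * m + 4)! := by ring
        _ = (A * (2 * m + 3)!) * (2 * m + 4)! := by rw [← e2, e1]
        _ = A * (2 * m + 3)! * (2 * m + 4)! := by ring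
    have hE' : ∏ j ∈ range (m + 1), j ! = E * m ! := Finset.prod_range_succ _ _
    have hG' : ∏ j ∈ range (m + 1), (2 * j + 3)! = G * (2 * m + 3)! :=
      Finset.prod_range_succ _ _
    have hO' : ∏ j ∈ range (m + 1), (2 * j + 1)! = O * (2 * m + 1)! :=
      Finset.prod_range_succ _ _
    have hcb : (m + 2) * Nat.centralBinom (m + 2) =
        2 * (2 * m + 3) * Nat.centralBinom (m + 1) := by
      have := Nat.succ_mul_centralBinom_succ (m + 1)
      convert this using 2 <;> omega
    -- factorial expansions
    have f1 : (2 * m + 4)! = (2 * m + 4) * ((2 * m + 3) * ((2 * m + 2) * (2 * m + 1)!)) := by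
      rw [show 2 * m + 4 = (2 * m + 3) + 1 by omega, Nat.factorial_succ,
        show 2 * m + 3 = (2 * m + 2) + 1 by omega, Nat.factorial_succ,
        show 2 * m + 2 = (2 * m + 1) + 1 by omega, Nat.factorial_succ]
    have f2 : (m + 3)! = (m + 3) * ((m + 2) * ((m + 1) * m !)) := by
      rw [show m + 3 = (m + 2) + 1 by omega, Nat.factorial_succ,
        show m + 2 = (m + 1) + 1 by omega, Nat.factorial_succ, Nat.factorial_succ]
    -- cancel the positive factor ((m+3)! * (m+2))
    have hpos : 0 < (m + 3)! * (m + 2) := by positivity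
    apply Nat.eq_of_mul_eq_mul_right hpos
    rw [hE', hG', hO']
    calc (∏ j ∈ range (m + 1), (m + 1 + 3 + j)!) * (E * m !) * (m + 1 + 2) *
          ((m + 3)! * (m + 2))
        = ((∏ j ∈ range (m + 1), (m + 1 + 3 + j)!) * (m + 3)!) *
            (E * m ! * (m + 3) * (m + 2)) := by ring
      _ = (A * (2 * m + 3)! * (2 * m + 4)!) * (E * m ! * (m + 3) * (m + 2)) := by rw [h1]
      _ = (A * E * (m + 2)) * ((2 * m + 3)! * (2 * m + 4)! * m ! * (m + 3)) := by ring
      _ = (2 ^ m * Nat.centralBinom (m + 1) * G * O) *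
            ((2 * m + 3)! * (2 * m + 4)! * m ! * (m + 3)) := by rw [ih]
      _ = (2 * (2 * m + 3) * Nat.centralBinom (m + 1)) *
            (2 ^ (m + 1) * G * O * (2 * m + 3)! * (2 * m + 1)! *
              ((m + 3) * ((m + 2) * ((m + 1) * m !)))) := by
          rw [f1]; ring
      _ = ((m + 2) * Nat.centralBinom (m + 2)) *
            (2 ^ (m + 1) * G * O * (2 * m + 3)! * (2 * m + 1)! *
              ((m + 3) * ((m + 2) * ((m + 1) * m !)))) := by rw [hcb]
      _ = 2 ^ (m + 1) * Nat.centralBinom (m + 2) * (G * (2 * m + 3)!) *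
            (O * (2 * m + 1)!) * ((m + 3)! * (m + 2)) := by
          rw [f2]; ring

/-- For every integer `g ≥ 4`, Room's degree
`D(g) = (∏_{j=0}^{g-4} C(g+j, g-3-j)) / (∏_{j=0}^{g-4} C(2g-7-2j, g-3-j))` is even; that is,
`2 · ∏_{j=0}^{g-4} C(2g-7-2j, g-3-j)` divides `∏_{j=0}^{g-4} C(g+j, g-3-j)`. -/
theorem room_degree_is_even (g : ℕ) (hg : 4 ≤ g) :
    (2 * ∏ j ∈ Finset.range (g - 3), Nat.choose (2 * g - 7 - 2 * j) (g - 3 - j)) ∣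
      ∏ j ∈ Finset.range (g - 3), Nat.choose (g + j) (g - 3 - j) := by
  obtain ⟨k, rfl⟩ : ∃ k, g = k + 4 := ⟨g - 4, by omega⟩
  set m := k + 1 with hm
  have hg3 : k + 4 - 3 = m := by omega
  rw [hg3]
  -- rewrite the products in terms of m
  have hDen : ∏ j ∈ range m, Nat.choose (2 * (k + 4) - 7 - 2 * j) (m - j) =
      ∏ j ∈ range m, Nat.choose (2 * m - 1 - 2 * j) (m - j) := by
    apply Finset.prod_congr rfl
    intro j _
    congr 2 <;> omega
  have hNum : ∏ j ∈ range m, Nat.choose (k + 4 + j) (m - j) =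
      ∏ j ∈ range m, Nat.choose (m + 3 + j) (m - j) := by
    apply Finset.prod_congr rfl
    intro j _
    congr 2 <;> omega
  rw [hDen, hNum]
  set Num := ∏ j ∈ range m, Nat.choose (m + 3 + j) (m - j) with hNumd
  set Den := ∏ j ∈ range m, Nat.choose (2 * m - 1 - 2 * j) (m - j) with hDend
  set Fm := ∏ j ∈ range m, (m - j)! with hFm
  set E := ∏ j ∈ range m, j ! with hEd
  set G := ∏ j ∈ range m, (2 * j + 3)! with hGd
  set O := ∏ j ∈ range m, (2 * j + 1)! with hOd
  -- Num * Fm * G = ∏ (m+3+j)!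
  have hnum : Num * Fm * G = ∏ j ∈ range m, (m + 3 + j)! := by
    rw [hNumd, hFm, hGd, ← Finset.prod_mul_distrib, ← Finset.prod_mul_distrib]
    apply Finset.prod_congr rfl
    intro j hj
    have hjm : j < m := Finset.mem_range.mp hj
    have h1 : m - j ≤ m + 3 + j := by omega
    have h2 : m + 3 + j - (m - j) = 2 * j + 3 := by omega
    have := Nat.choose_mul_factorial_mul_factorial h1
    rw [h2] at this
    exact this
  -- Den * Fm * E = O
  have hden : Den * Fm * E = O := by
    have hO2 : O = ∏ j ∈ range m, (2 * m - 1 - 2 * j)! := by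
      rw [hOd, ← Finset.prod_range_reflect (fun j => (2 * j + 1)!) m]
      apply Finset.prod_congr rfl
      intro j hj
      have hjm : j < m := Finset.mem_range.mp hj
      congr 1
      omega
    have hE2 : E = ∏ j ∈ range m, (m - 1 - j)! := by
      rw [hEd, ← Finset.prod_range_reflect (fun j => (j : ℕ)!) m]
    rw [hDend, hFm, hE2, hO2, ← Finset.prod_mul_distrib, ← Finset.prod_mul_distrib]
    apply Finset.prod_congr rfl
    intro j hj
    have hjm : j < m := Finset.mem_range.mp hj
    have h1 : m - j ≤ 2 * m - 1 - 2 * j := by omega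
    have h2 : 2 * m - 1 - 2 * j - (m - j) = m - 1 - j := by omega
    have := Nat.choose_mul_factorial_mul_factorial h1
    rw [h2] at this
    exact this
  -- centralBinom (m+1) = (m+2) * catalan (m+1)
  have hcat : Nat.centralBinom (m + 1) = (m + 2) * catalan (m + 1) := by
    rw [← succ_mul_catalan_eq_centralBinom]
  -- main equation : Num = 2^m * catalan (m+1) * Den
  have key : Num = 2 ^ m * catalan (m + 1) * Den := by
    have hF : 0 < Fm := Finset.prod_pos fun j _ => Nat.factorial_pos _
    have hGp : 0 < G := Finset.prod_pos fun j _ => Nat.factorial_pos _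
    have hEp : 0 < E := Finset.prod_pos fun j _ => Nat.factorial_pos _
    have hpos : 0 < Fm * G * E * (m + 2) := by positivity
    apply Nat.eq_of_mul_eq_mul_right hpos
    have hc := room_claim m
    calc Num * (Fm * G * E * (m + 2))
        = (Num * Fm * G) * E * (m + 2) := by ring
      _ = (∏ j ∈ range m, (m + 3 + j)!) * E * (m + 2) := by rw [hnum]
      _ = 2 ^ m * Nat.centralBinom (m + 1) * G * O := hc
      _ = 2 ^ m * ((m + 2) * catalan (m + 1)) * G * (Den * Fm * E) := by
          rw [← hcat, hden]
      _ = 2 ^ m * catalan (m + 1) * Den * (Fm * G * E * (m + 2)) := by ring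
  rw [key, hm]
  exact ⟨2 ^ k * catalan (k + 1 + 1), by ring⟩
end

section
/- For every integer g ≥ 4, D(g) ≥ 4^{g−3}, where D(g) = (∏_{j=0}^{g−4} C(g+j, g−3−j)) / (∏_{j=0}^{g−4} C(2g−7−2j, g−3−j)); equivalently, ∏_{j=0}^{g−4} C(g+j, g−3−j) ≥ 4^{g−3} · ∏_{j=0}^{g−4} C(2g−7−2j, g−3−j). -/
open Finset Nat

private lemma key_fact (m : ℕ) : 2^m * ((m+1)! * (m+2)!) ≤ (2*m+2)! := by
  induction m with
  | zero => norm_num [Nat.factorial]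
  | succ m ih =>
    have e1 : 2*(m+1)+2 = 2*m+4 := by ring
    have e2 : (m+1)+1 = m+2 := rfl
    have e3 : (m+1)+2 = m+3 := rfl
    rw [e1, e2, e3]
    have f3 : (m+3)! = (m+3)*(m+2)! := Nat.factorial_succ (m+2)
    have f2 : (m+2)! = (m+2)*(m+1)! := Nat.factorial_succ (m+1)
    have g4 : (2*m+4)! = (2*m+4)*(2*m+3)! := Nat.factorial_succ (2*m+3)
    have g3 : (2*m+3)! = (2*m+3)*(2*m+2)! := Nat.factorial_succ (2*m+2)
    have h2 : 2^(m+1) * ((m+2)! * (m+3)!) =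
        (2*(m+2)) * ((m+3) * (2^m * ((m+1)! * (m+2)!))) := by
      rw [f3, f2, pow_succ]; ring
    rw [g4, g3, h2]
    calc (2*(m+2)) * ((m+3) * (2^m * ((m+1)! * (m+2)!)))
        ≤ (2*(m+2)) * ((m+3) * (2*m+2)!) :=
          Nat.mul_le_mul_left _ (Nat.mul_le_mul_left _ ih)
      _ ≤ (2*m+4) * ((2*m+3) * (2*m+2)!) := by
          rw [show 2*(m+2) = 2*m+4 by ring]
          exact Nat.mul_le_mul_left _ (Nat.mul_le_mul_right _ (by omega))

private lemma E_rec (m : ℕ) : (∏ j ∈ range (m+1), (m+4+j)!) * (m+3)! =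
    (∏ j ∈ range m, (m+3+j)!) * ((2*m+3)! * (2*m+4)!) := by
  have h0 : ∏ j ∈ range (m+2), (m+3+j)! =
      (∏ j ∈ range (m+1), (m+3+(j+1))!) * (m+3+0)! :=
    Finset.prod_range_succ' (fun j => (m+3+j)!) (m+1)
  have h2 : ∏ j ∈ range (m+1), (m+3+(j+1))! = ∏ j ∈ range (m+1), (m+4+j)! :=
    Finset.prod_congr rfl fun j _ => by rw [show m+3+(j+1) = m+4+j by ring]
  have h1 : ∏ j ∈ range (m+2), (m+3+j)! =
      ((∏ j ∈ range m, (m+3+j)!) * (m+3+m)!) * (m+3+(m+1))! := by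
    rw [Finset.prod_range_succ, Finset.prod_range_succ]
  rw [h2, show m+3+0 = m+3 by ring] at h0
  rw [show m+3+m = 2*m+3 by ring, show m+3+(m+1) = 2*m+4 by ring] at h1
  rw [← h0, h1]; ring

private lemma ident (m : ℕ) :
    (∏ j ∈ range m, (m+3+j)!) * (∏ j ∈ range m, j !) * (2^m * ((m+1)! * (m+2)!)) =
    4^m * ((∏ j ∈ range m, (2*j+1)!) * (∏ j ∈ range m, (2*j+3)!)) * (2*m+2)! := by
  induction m with
  | zero => norm_num [Nat.factorial]
  | succ m ih =>
    have hnorm : ∏ j ∈ range (m+1), (m+1+3+j)! = ∏ j ∈ range (m+1), (m+4+j)! :=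
      Finset.prod_congr rfl fun j _ => by rw [show m+1+3+j = m+4+j by ring]
    rw [hnorm, show (m+1)+1 = m+2 from rfl, show (m+1)+2 = m+3 from rfl,
      show 2*(m+1)+2 = 2*m+4 by ring,
      Finset.prod_range_succ (fun j => j !),
      Finset.prod_range_succ (fun j => (2*j+1)!),
      Finset.prod_range_succ (fun j => (2*j+3)!)]
    refine Nat.eq_of_mul_eq_mul_right
      (show 0 < (m+3)! * ((m+1)! * (m+2)!) by positivity) ?_
    have hE := E_rec m
    have f1 : (m+1)! = (m+1) * m ! := Nat.factorial_succ m
    have f2 : (m+2)! = (m+2) * ((m+1) * m !) := by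
      rw [Nat.factorial_succ (m+1), f1]
    have f3 : (m+3)! = (m+3) * ((m+2) * ((m+1) * m !)) := by
      rw [Nat.factorial_succ (m+2), f2]
    have g2 : (2*m+2)! = (2*m+2) * (2*m+1)! := Nat.factorial_succ (2*m+1)
    have g3 : (2*m+3)! = (2*m+3) * ((2*m+2) * (2*m+1)!) := by
      rw [Nat.factorial_succ (2*m+2), g2]
    have g4 : (2*m+4)! = (2*m+4) * ((2*m+3) * ((2*m+2) * (2*m+1)!)) := by
      rw [Nat.factorial_succ (2*m+3), g3]
    rw [f3, f2, g4, g3]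
    rw [f3, g4, g3] at hE
    rw [f2, f1, g2] at ih
    rw [f1]
    qify at hE ih ⊢
    linear_combination
      (2^(m+1) * (∏ j ∈ range m, (j ! : ℚ)) * (m ! : ℚ) * ((m+1) * m !)
        * ((m+2) * ((m+1) * m !))^2 * ((m+3) * ((m+2) * ((m+1) * (m ! : ℚ))))) * hE
      + (((2*m+3) * ((2*m+2) * ((2*m+1)! : ℚ))) * ((2*m+4) * ((2*m+3) * ((2*m+2) * ((2*m+1)! : ℚ))))
        * ((m+3) * ((m+2) * ((m+1) * (m ! : ℚ)))) * ((m+2) * ((m+1) * (m ! : ℚ))) * (m ! : ℚ) * 2) * ih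

private lemma main_ineq (m : ℕ) :
    4^m * ∏ j ∈ range m, Nat.choose (2*(m-j)-1) (m-j) ≤
      ∏ j ∈ range m, Nat.choose (m+3+j) (m-j) := by
  set A := ∏ j ∈ range m, (m-j)! with hA
  set B := ∏ j ∈ range m, (2*j+3)! with hB
  set C := ∏ j ∈ range m, j ! with hC
  set E := ∏ j ∈ range m, (m+3+j)! with hEe
  set F := ∏ j ∈ range m, (2*j+1)! with hF
  have hPE : (∏ j ∈ range m, Nat.choose (m+3+j) (m-j)) * A * B = E := by
    rw [hA, hB, hEe, ← Finset.prod_mul_distrib, ← Finset.prod_mul_distrib]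
    refine Finset.prod_congr rfl fun j hj => ?_
    have hj' : j < m := Finset.mem_range.mp hj
    have h := Nat.choose_mul_factorial_mul_factorial (show m-j ≤ m+3+j by omega)
    rwa [show m+3+j - (m-j) = 2*j+3 by omega] at h
  have hQF : (∏ j ∈ range m, Nat.choose (2*(m-j)-1) (m-j)) * A * C = F := by
    have hC' : ∏ j ∈ range m, (m-1-j)! = C := Finset.prod_range_reflect (fun j => j !) m
    have hF' : ∏ j ∈ range m, (2*(m-1-j)+1)! = F :=
      Finset.prod_range_reflect (fun j => (2*j+1)!) m
    rw [hA, ← hC', ← hF', ← Finset.prod_mul_distrib, ← Finset.prod_mul_distrib]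
    refine Finset.prod_congr rfl fun j hj => ?_
    have hj' : j < m := Finset.mem_range.mp hj
    have h := Nat.choose_mul_factorial_mul_factorial
      (show m-j ≤ 2*(m-j)-1 by omega)
    rw [show 2*(m-j)-1 - (m-j) = m-1-j by omega] at h
    rw [h]
    congr 1
    omega
  have hKey := key_fact m
  have hId := ident m
  have hEC : 4^m * (F * B) ≤ E * C := by
    refine Nat.le_of_mul_le_mul_right ?_
      (show 0 < 2^m * ((m+1)! * (m+2)!) by positivity)
    calc 4^m * (F * B) * (2^m * ((m+1)! * (m+2)!))
        ≤ 4^m * (F * B) * (2*m+2)! := Nat.mul_le_mul_left _ hKey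
      _ = E * C * (2^m * ((m+1)! * (m+2)!)) := hId.symm
  refine Nat.le_of_mul_le_mul_right ?_
    (show 0 < A * (B * C) by
      refine Nat.mul_pos ?_ (Nat.mul_pos ?_ ?_) <;>
        exact Finset.prod_pos fun j _ => Nat.factorial_pos _)
  have e1 : 4^m * (∏ j ∈ range m, Nat.choose (2*(m-j)-1) (m-j)) * (A * (B * C)) =
      4^m * (F * B) := by rw [← hQF]; ring
  have e2 : (∏ j ∈ range m, Nat.choose (m+3+j) (m-j)) * (A * (B * C)) = E * C := by
    rw [← hPE]; ring
  rw [e1, e2]; exact hEC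

/-- For every integer `g ≥ 4`, `D(g) ≥ 4^(g-3)` where
`D(g) = (∏_{j=0}^{g-4} C(g+j, g-3-j)) / (∏_{j=0}^{g-4} C(2g-7-2j, g-3-j))`, stated in the
division-free form `∏_{j=0}^{g-4} C(g+j, g-3-j) ≥ 4^(g-3) · ∏_{j=0}^{g-4} C(2g-7-2j, g-3-j)`. -/
theorem room_degree_ge_four_pow (g : ℕ) (hg : 4 ≤ g) :
    4 ^ (g - 3) * ∏ j ∈ Finset.range (g - 3), Nat.choose (2 * g - 7 - 2 * j) (g - 3 - j) ≤
      ∏ j ∈ Finset.range (g - 3), Nat.choose (g + j) (g - 3 - j) := by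
  obtain ⟨m, rfl⟩ : ∃ m, g = m + 3 := ⟨g - 3, by omega⟩
  simp only [Nat.add_sub_cancel]
  have hq : ∏ j ∈ range m, Nat.choose (2*(m+3)-7-2*j) (m-j) =
      ∏ j ∈ range m, Nat.choose (2*(m-j)-1) (m-j) := by
    refine Finset.prod_congr rfl fun j hj => ?_
    have hj' : j < m := Finset.mem_range.mp hj
    congr 1
    omega
  rw [hq]
  exact main_ineq m
end

section
/- For every integer p ≥ 1, C(2p+2, p+1)/2 + Σ_{k even, k≥2} C(2p+2, p+1−2k) = 2^{p−1}(2^p + 1), where the sum runs over even integers k with 2 ≤ k ≤ ⌊(p+1)/2⌋. -/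
open Finset

/-- Sum of binomial coefficients `C(n,j)` over `j ≡ r (mod 4)`. -/
def bsum (n r : ℕ) : ℕ :=
  ∑ j ∈ range (n+1), if j % 4 = r then Nat.choose n j else 0

lemma bsum_succ (n r : ℕ) (hr : r < 4) :
    bsum (n+1) r = bsum n r + bsum n ((r+3) % 4) := by
  unfold bsum
  rw [Finset.sum_range_succ' (fun j => if j % 4 = r then Nat.choose (n+1) j else 0)]
  have h1 : ∀ j, (if (j+1) % 4 = r then Nat.choose (n+1) (j+1) else 0)
      = (if j % 4 = (r+3)%4 then Nat.choose n j else 0)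
        + (if (j+1) % 4 = r then Nat.choose n (j+1) else 0) := by
    intro j
    have hiff : (j+1) % 4 = r ↔ j % 4 = (r+3) % 4 := by omega
    by_cases h : (j+1) % 4 = r
    · rw [if_pos h, if_pos (hiff.mp h), if_pos h, Nat.choose_succ_succ]
    · rw [if_neg h, if_neg (fun hh => h (hiff.mpr hh)), if_neg h]
  simp only [h1, Finset.sum_add_distrib]
  have h2 : (∑ j ∈ range (n+1), if (j+1) % 4 = r then Nat.choose n (j+1) else 0)
      + (if 0 % 4 = r then Nat.choose n 0 else 0)
      = ∑ j ∈ range (n+2), if j % 4 = r then Nat.choose n j else 0 := by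
    rw [Finset.sum_range_succ' (fun j => if j % 4 = r then Nat.choose n j else 0)]
  have h3 : (∑ j ∈ range (n+2), if j % 4 = r then Nat.choose n j else 0)
      = ∑ j ∈ range (n+1), if j % 4 = r then Nat.choose n j else 0 := by
    rw [Finset.sum_range_succ]
    simp [Nat.choose_succ_self]
  simp only [Nat.choose_zero_right] at h2 ⊢
  omega

lemma bsum_formula (p : ℕ) :
    bsum (2*p+2) ((p+1) % 4) = 4^p + 2^p ∧
    bsum (2*p+2) ((p+3) % 4) = 4^p - 2^p ∧
    bsum (2*p+2) (p % 4) = 4^p ∧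
    bsum (2*p+2) ((p+2) % 4) = 4^p := by
  induction p with
  | zero => refine ⟨?_, ?_, ?_, ?_⟩ <;> decide
  | succ p ih =>
    obtain ⟨h1, h2, h3, h4⟩ := ih
    have hle : 2^p ≤ 4^p := Nat.pow_le_pow_left (by norm_num) p
    have e : 2*(p+1)+2 = (2*p+2)+1+1 := by ring
    have key : ∀ r < 4, bsum (2*(p+1)+2) r
        = bsum (2*p+2) r + 2 * bsum (2*p+2) ((r+3)%4) + bsum (2*p+2) ((r+6)%4) := by
      intro r hr
      rw [e, bsum_succ (2*p+2+1) r hr, bsum_succ (2*p+2) r hr,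
        bsum_succ (2*p+2) ((r+3)%4) (by omega)]
      have : ((r+3)%4+3)%4 = (r+6)%4 := by omega
      rw [this]; ring
    refine ⟨?_, ?_, ?_, ?_⟩
    · rw [show (p+1+1)%4 = (p+2)%4 from rfl, key _ (by omega),
        show ((p+2)%4+3)%4 = (p+1)%4 by omega, show ((p+2)%4+6)%4 = p%4 by omega,
        h1, h3, h4]
      ring
    · rw [show (p+1+3)%4 = p%4 by omega, key _ (by omega),
        show (p%4+3)%4 = (p+3)%4 by omega, show (p%4+6)%4 = (p+2)%4 by omega,
        h2, h3, h4]
      have h4p : 4^(p+1) = 4*4^p := by ring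
      have h2p : 2^(p+1) = 2*2^p := by ring
      omega
    · rw [show (p+1)%4 = (p+1)%4 from rfl, key _ (by omega),
        show ((p+1)%4+3)%4 = p%4 by omega, show ((p+1)%4+6)%4 = (p+3)%4 by omega,
        h1, h2, h3]
      have h4p : 4^(p+1) = 4*4^p := by ring
      omega
    · rw [show (p+1+2)%4 = (p+3)%4 from rfl, key _ (by omega),
        show ((p+3)%4+3)%4 = (p+2)%4 by omega, show ((p+3)%4+6)%4 = (p+1)%4 by omega,
        h1, h2, h4]
      have h4p : 4^(p+1) = 4*4^p := by ring
      omega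

lemma bsum_split (p : ℕ) :
    bsum (2*p+2) ((p+1)%4)
      = Nat.choose (2*p+2) (p+1)
        + 2 * ∑ m ∈ Icc 1 ((p+1)/4), Nat.choose (2*p+2) (p+1-4*m) := by
  set M := (p+1)/4 with hM
  set r := (p+1)%4 with hr
  have hpr : p + 1 = 4*M + r := by omega
  have hr4 : r < 4 := by omega
  have himg : (range (2*p+2+1)).filter (fun j => j % 4 = r)
      = image (fun m => r + 4*m) (range (2*M+1)) := by
    ext j
    simp only [mem_filter, mem_range, mem_image]
    constructor
    · rintro ⟨hj, hjr⟩
      exact ⟨j/4, by omega, by omega⟩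
    · rintro ⟨m, hm, rfl⟩
      omega
  have h0 : bsum (2*p+2) r = ∑ m ∈ range (2*M+1), Nat.choose (2*p+2) (r+4*m) := by
    unfold bsum
    rw [← Finset.sum_filter, himg,
      Finset.sum_image (by intro a _ b _ h; simp only at h; omega)]
  rw [h0, show 2*M+1 = (M+1)+M by ring, Finset.sum_range_add, Finset.sum_range_succ]
  have hmid : r + 4*M = p+1 := by omega
  rw [hmid]
  have hleft : ∑ i ∈ range M, Nat.choose (2*p+2) (r + 4*i)
      = ∑ i ∈ range M, Nat.choose (2*p+2) (p+1-4*(i+1)) := by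
    rw [← Finset.sum_range_reflect]
    refine Finset.sum_congr rfl fun i hi => ?_
    simp only [mem_range] at hi
    congr 1
    omega
  have hright : ∀ i ∈ range M, Nat.choose (2*p+2) (r+4*(M+1+i))
      = Nat.choose (2*p+2) (p+1-4*(i+1)) := by
    intro i hi
    simp only [mem_range] at hi
    rw [show r+4*(M+1+i) = 2*p+2 - (p+1-4*(i+1)) by omega,
      Nat.choose_symm (by omega)]
  rw [hleft, Finset.sum_congr rfl hright,
    show ∑ m ∈ Icc 1 M, Nat.choose (2*p+2) (p+1-4*m)
      = ∑ i ∈ range M, Nat.choose (2*p+2) (p+1-4*(i+1)) from ?_]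
  · ring
  · rw [show Icc 1 M = Ico 1 (M+1) by rw [Finset.Ico_add_one_right_eq_Icc],
      Finset.sum_Ico_eq_sum_range]
    refine Finset.sum_congr rfl fun i _ => by congr 1; omega

/-- For every integer `p ≥ 1`,
`C(2p+2, p+1)/2 + Σ_{k even, 2 ≤ k ≤ ⌊(p+1)/2⌋} C(2p+2, p+1-2k) = 2^(p-1)(2^p + 1)`.
(The number of even theta characteristics on a hyperelliptic curve of genus `p`.) -/
theorem count_even_theta_characteristics (p : ℕ) (hp : 1 ≤ p) :
    Nat.choose (2 * p + 2) (p + 1) / 2 +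
      (∑ k ∈ (Finset.Icc 2 ((p + 1) / 2)).filter (fun k => Even k),
        Nat.choose (2 * p + 2) (p + 1 - 2 * k)) = 2 ^ (p - 1) * (2 ^ p + 1) := by
  have h1 := (bsum_formula p).1
  have h2 := bsum_split p
  have h3 : ∑ k ∈ (Finset.Icc 2 ((p + 1) / 2)).filter (fun k => Even k),
        Nat.choose (2 * p + 2) (p + 1 - 2 * k)
      = ∑ m ∈ Icc 1 ((p+1)/4), Nat.choose (2*p+2) (p+1-4*m) := by
    rw [show (Finset.Icc 2 ((p + 1) / 2)).filter (fun k => Even k)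
        = image (fun m => 2*m) (Icc 1 ((p+1)/4)) from ?_]
    · rw [Finset.sum_image (by intro a _ b _ h; simp only at h; omega)]
      exact Finset.sum_congr rfl fun m _ => by congr 1; omega
    · ext k
      simp only [mem_filter, mem_Icc, mem_image, Nat.even_iff]
      constructor
      · rintro ⟨⟨h2k, hk⟩, hek⟩
        exact ⟨k/2, by omega, by omega⟩
      · rintro ⟨m, hm, rfl⟩
        omega
  have hcs := Nat.choose_symm (show p+1 ≤ 2*p+1 by omega)
  rw [show 2*p+1-(p+1) = p by omega] at hcs
  have hc : Nat.choose (2*p+2) (p+1) = 2 * Nat.choose (2*p+1) (p+1) := by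
    rw [show 2*p+2 = (2*p+1)+1 from rfl, Nat.choose_succ_succ (2*p+1) p, hcs]
    ring
  rw [h3, hc, Nat.mul_div_cancel_left _ (by norm_num)]
  rw [hc, h1] at h2
  have hp2 : 2^p = 2*2^(p-1) := by
    rw [← pow_succ']
    congr 1
    omega
  have h4 : (4:ℕ)^p = 2^p*2^p := by
    rw [show (4:ℕ) = 2*2 from rfl, mul_pow]
  have h5 : 2*(2^(p-1)*(2^p+1)) = 2^p*(2^p+1) := by
    rw [← mul_assoc, ← hp2]
  have h6 : 2^p*(2^p+1) = 2^p*2^p + 2^p := by ring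
  omega
end
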